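/- For V_13 with 1/2 < a ≤ 1: if x⁽⁰⁾ ∈ S² with x₁⁽⁰⁾ = 0 and x⁽⁰⁾ ≠ e₂, e₃, then the trajectory V_13ⁿ(x⁽⁰⁾) converges to e₂ = (0,1,0). -/

import Mathlib

def V13 (a : ℝ) (p : ℝ × ℝ × ℝ) : ℝ × ℝ × ℝ :=
  (p.1^2 + 2*a*p.1*(1-p.1), p.2.1^2 + 2*p.2.1*p.2.2, p.2.2^2 + 2*(1-a)*p.1*(1-p.1))

def S2 : Set (ℝ × ℝ × ℝ) :=
  {p | 0 ≤ p.1 ∧ 0 ≤ p.2.1 ∧ 0 ≤ p.2.2 ∧ p.1 + p.2.1 + p.2.2 = 1}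

/-
On the face `x₁ = 0` the map `V13 a` sends `(0, 1 - z, z)` to `(0, 1 - z², z²)`, so the `n`-th
iterate has third coordinate `z ^ 2 ^ n`, which tends to `0` as soon as `0 ≤ z < 1`, i.e. unless the
starting point is `e₃`.
-/

open Filter Topology

lemma eq_zero_one_sub_of_mem_S2 {x : ℝ × ℝ × ℝ} (hx : x ∈ S2) (h1 : x.1 = 0) :
    x = (0, 1 - x.2.2, x.2.2) := by
  obtain ⟨x1, y, z⟩ := x
  obtain ⟨-, -, -, hsum⟩ := hx
  simp only at h1 hsum ⊢
  subst h1
  congr 2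
  linarith

lemma V13_zero_one_sub (a z : ℝ) : V13 a (0, 1 - z, z) = (0, 1 - z ^ 2, z ^ 2) := by
  simp only [V13, Prod.mk.injEq]
  refine ⟨?_, ?_, ?_⟩ <;> ring

lemma iterate_V13_zero_one_sub (a z : ℝ) (n : ℕ) :
    (V13 a)^[n] (0, 1 - z, z) = (0, 1 - z ^ 2 ^ n, z ^ 2 ^ n) := by
  induction n with
  | zero => simp
  | succ n ih =>
    rw [Function.iterate_succ_apply', ih, V13_zero_one_sub, ← pow_mul, ← pow_succ]

lemma tendsto_pow_two_pow_nhds_zero {R : Type*} [NormedRing R] {z : R} (hz : ‖z‖ < 1) :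
    Tendsto (fun n : ℕ => z ^ 2 ^ n) atTop (𝓝 0) :=
  (tendsto_pow_atTop_nhds_zero_of_norm_lt_one hz).comp
    (tendsto_pow_atTop_atTop_of_one_lt one_lt_two)

theorem V13_face_converges_e2 (a : ℝ)
    (x : ℝ × ℝ × ℝ) (hx : x ∈ S2) (h1 : x.1 = 0)
    (h3 : x ≠ ((0:ℝ),(0:ℝ),(1:ℝ))) :
    Filter.Tendsto (fun n => (V13 a)^[n] x) Filter.atTop
      (nhds ((0:ℝ), (1:ℝ), (0:ℝ))) := by
  have hx_eq := eq_zero_one_sub_of_mem_S2 hx h1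
  set z := x.2.2
  have hz_nonneg : 0 ≤ z := hx.2.2.1
  have hz_lt_one : z < 1 := by
    refine lt_of_le_of_ne (by linarith [hx.2.1, hx.2.2.2]) fun hz => h3 ?_
    rw [hx_eq, hz]
    norm_num
  have hlim := tendsto_pow_two_pow_nhds_zero (z := z) (by rwa [Real.norm_of_nonneg hz_nonneg])
  rw [hx_eq]
  simp_rw [iterate_V13_zero_one_sub]
  refine tendsto_const_nhds.prodMk_nhds (Tendsto.prodMk_nhds ?_ hlim)
  simpa using (tendsto_const_nhds (x := (1 : ℝ))).sub hlim
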